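/- For the TRIP-Stern sequence for (e,23,23), the level sums satisfy the recurrence S(n) = S(n−1) + 4·S(n−2) for all n ≥ 2, with initial values S(0) = 3 and S(1) = 8. -/

import Mathlib

/-! The children of `(a, b, c)` have coordinate sums adding up to `3(a + b + c) - b` and middle
coordinates adding up to `2(a + b + c) - 2b`. Hence the level sum `S n` and the level sum
`middleSum n` of middle coordinates obey the linear recurrence given by the matrix
`[[3, -1], [2, -2]]`, whose characteristic polynomial `x² - x - 4` yields
`S (n + 2) = S (n + 1) + 4 S n`. -/

/-- `f₀(a,b,c) = (b,a+c,c)` for the triplet `(e,23,23)`. -/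
def f0 (p : ℤ × ℤ × ℤ) : ℤ × ℤ × ℤ := (p.2.1, p.1 + p.2.2, p.2.2)

/-- `f₁(a,b,c) = (a,a+c,b)` for the triplet `(e,23,23)`. -/
def f1 (p : ℤ × ℤ × ℤ) : ℤ × ℤ × ℤ := (p.1, p.1 + p.2.2, p.2.1)

/-- One step of the TRIP-Stern tree: apply `f₁` on a `true` and `f₀` on a `false`. -/
def step (p : ℤ × ℤ × ℤ) (i : Bool) : ℤ × ℤ × ℤ := if i then f1 p else f0 p

/-- `Δ(v) = f_{iₙ}(⋯ f_{i₁}(1,1,1) ⋯)`, applying `f_{i₁}` first. -/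
def delta (v : List Bool) : ℤ × ℤ × ℤ := v.foldl step (1, 1, 1)

/-- `S n` is the sum of all three coordinates of all `2ⁿ` level-`n` triples. -/
def S (n : ℕ) : ℤ :=
  ∑ v : Fin n → Bool,
    ((delta (List.ofFn v)).1 + (delta (List.ofFn v)).2.1 + (delta (List.ofFn v)).2.2)

theorem sum_ofFn_succ {α M : Type*} [Fintype α] [AddCommMonoid M] (g : List α → M) (n : ℕ) :
    ∑ v : Fin (n + 1) → α, g (List.ofFn v) =
      ∑ v : Fin n → α, ∑ a, g (List.ofFn v ++ [a]) := by
  rw [← (Fin.snocEquiv fun _ => α).sum_comp, Fintype.sum_prod_type, Finset.sum_comm]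
  simp only [Fin.snocEquiv_apply, List.ofFn_succ', Fin.snoc_castSucc, Fin.snoc_last,
    List.concat_eq_append]

theorem delta_append_singleton (l : List Bool) (i : Bool) :
    delta (l ++ [i]) = step (delta l) i :=
  List.foldl_append ..

theorem sum_delta_succ {M : Type*} [AddCommMonoid M] (g : ℤ × ℤ × ℤ → M) (n : ℕ) :
    ∑ v : Fin (n + 1) → Bool, g (delta (List.ofFn v)) =
      ∑ v : Fin n → Bool, (g (f0 (delta (List.ofFn v))) + g (f1 (delta (List.ofFn v)))) := by
  refine (sum_ofFn_succ (fun l => g (delta l)) n).trans ?_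
  simp only [delta_append_singleton, Fintype.sum_bool, step, if_true, Bool.false_eq_true,
    if_false, add_comm]

def middleSum (n : ℕ) : ℤ := ∑ v : Fin n → Bool, (delta (List.ofFn v)).2.1

theorem S_succ (n : ℕ) : S (n + 1) = 3 * S n - middleSum n := by
  rw [S, sum_delta_succ (fun p => p.1 + p.2.1 + p.2.2), S, middleSum, Finset.mul_sum,
    ← Finset.sum_sub_distrib]
  refine Finset.sum_congr rfl fun v _ => ?_
  simp only [f0, f1]
  ring

theorem middleSum_succ (n : ℕ) : middleSum (n + 1) = 2 * S n - 2 * middleSum n := by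
  rw [middleSum, sum_delta_succ (fun p => p.2.1), S, middleSum, Finset.mul_sum, Finset.mul_sum,
    ← Finset.sum_sub_distrib]
  refine Finset.sum_congr rfl fun v _ => ?_
  simp only [f0, f1]
  ring

theorem S_add_two (n : ℕ) : S (n + 2) = S (n + 1) + 4 * S n := by
  linear_combination S_succ (n + 1) - middleSum_succ n + 2 * S_succ n

/-- For the TRIP-Stern sequence for `(e,23,23)`, the level sums satisfy
`S(n) = S(n−1) + 4·S(n−2)` for all `n ≥ 2`, with `S(0) = 3` and `S(1) = 8`. -/
theorem levelSum_recurrence_e2323 :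
    S 0 = 3 ∧ S 1 = 8 ∧
    (∀ n : ℕ, 2 ≤ n → S n = S (n - 1) + 4 * S (n - 2)) := by
  have hS₀ : S 0 = 3 := by simp [S, delta]
  refine ⟨hS₀, ?_, ?_⟩
  · rw [S_succ, hS₀]
    simp [middleSum, delta]
  · intro n hn
    obtain ⟨m, rfl⟩ := Nat.exists_eq_add_of_le' hn
    simpa using S_add_two m
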